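/- arXiv:1212.5003 — 2 statements merged into one kernel-verified Lean document; each statement's English description precedes it below -/
import Mathlib

section
/- Let α be an alphabet and let a support over the simple regular expressions be given, consisting of: a type 𝔼; a map h : 𝔼 → RegularExpression α; a binary operation ∨𝔼 on 𝔼; an operation ·𝔼 : 𝔼 → RegularExpression α → 𝔼; and elements 1𝔼, 0𝔼 of 𝔼, satisfying L(h(𝒜 ∨𝔼 ℬ)) = L(h(𝒜)) ∪ L(h(ℬ)), L(h(𝒜 ·𝔼 F)) = L(h(𝒜)) · L(F), L(h(1𝔼)) = {ε} and L(h(0𝔼)) = ∅. Let D be the derivation via this support. Then for every nonempty word w over α and every regular expression E over α, the language of h(D(w,E)) equals the left quotient of L(E) by w: L(h(D(w,E))) = w⁻¹(L(E)). -/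
open scoped Classical

/-- A support over the simple regular expressions: a structure set `ε`, a map `h` back to
regular expressions, a sum-like operation `vee`, a product `dot` with an expression, and
constants `one`, `zero`, subject to the language conditions of Definition 1 of the paper. -/
structure Support (α : Type*) (ε : Type*) where
  h : ε → RegularExpression α
  vee : ε → ε → ε
  dot : ε → RegularExpression α → ε
  one : ε
  zero : ε
  h_vee : ∀ A B : ε, (h (vee A B)).matches' = (h A).matches' + (h B).matches'
  h_dot : ∀ (A : ε) (F : RegularExpression α), (h (dot A F)).matches' = (h A).matches' * F.matches'
  h_one : (h one).matches' = 1
  h_zero : (h zero).matches' = 0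

/-- Derivation of a regular expression with respect to a single symbol, via a support. -/
noncomputable def derivS {α ε : Type*} (S : Support α ε) (a : α) : RegularExpression α → ε
  | .zero => S.zero
  | .epsilon => S.zero
  | .char b => if b = a then S.one else S.zero
  | .plus E₁ E₂ => S.vee (derivS S a E₁) (derivS S a E₂)
  | .comp E₁ E₂ =>
      if [] ∈ E₁.matches' then S.vee (S.dot (derivS S a E₁) E₂) (derivS S a E₂)
      else S.dot (derivS S a E₁) E₂
  | .star E₁ => S.dot (derivS S a E₁) E₁.star

/-- Derivation via a support with respect to a nonempty word `a :: w`. -/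
noncomputable def derivWordS {α ε : Type*} (S : Support α ε) :
    α → List α → RegularExpression α → ε
  | a, [], E => derivS S a E
  | a, b :: u, E => derivWordS S b u (S.h (derivS S a E))

/-- Left quotient of a language by a word. -/
def lquot {α : Type*} (w : List α) (L : Language α) : Language α := {v | w ++ v ∈ L}

/-! Each clause of `derivS` mirrors the corresponding clause of Brzozowski's derivative
`RegularExpression.deriv`, and the support axioms say that `S.h` carries the operations on `ε` to
the language operations, so `S.h (derivS S a E)` has the language of `E.deriv a`, which is the
quotient of `L(E)` by the letter `a`. Derivation by a word iterates derivation by its letters,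
just as the quotient by a word iterates quotients by letters. -/

lemma lquot_append {α : Type*} (u v : List α) (L : Language α) :
    lquot (u ++ v) L = lquot v (lquot u L) := by
  ext x
  change (u ++ v) ++ x ∈ L ↔ u ++ (v ++ x) ∈ L
  rw [List.append_assoc]

namespace RegularExpression

variable {α : Type*} [DecidableEq α]

lemma matchEpsilon_iff (E : RegularExpression α) : E.matchEpsilon ↔ [] ∈ E.matches' :=
  rmatch_iff_matches' E []

lemma deriv_mul (P Q : RegularExpression α) (a : α) :
    (P * Q).deriv a = if [] ∈ P.matches' then P.deriv a * Q + Q.deriv a else P.deriv a * Q := by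
  simp only [RegularExpression.deriv, matchEpsilon_iff]

lemma matches'_deriv (E : RegularExpression α) (a : α) :
    (E.deriv a).matches' = lquot [a] E.matches' := by
  ext x
  exact rmatch_iff_matches' (E.deriv a) x |>.symm.trans (rmatch_iff_matches' E (a :: x))

end RegularExpression

namespace Support

open RegularExpression

variable {α ε : Type*} (S : Support α ε)

lemma matches'_h_derivS (a : α) (E : RegularExpression α) :
    (S.h (derivS S a E)).matches' = (E.deriv a).matches' := by
  induction E with
  | zero => simp [derivS, S.h_zero]
  | epsilon => simp [derivS, S.h_zero]
  | char b =>
    by_cases hb : b = a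
    · subst hb
      simp [derivS, S.h_one]
    · simp [derivS, hb, S.h_zero]
  | plus E₁ E₂ ih₁ ih₂ =>
    rw [derivS, plus_def, RegularExpression.deriv_add, S.h_vee, ih₁, ih₂, matches'_add]
  | comp E₁ E₂ ih₁ ih₂ =>
    rw [derivS, comp_def, RegularExpression.deriv_mul]
    split_ifs <;> simp only [S.h_vee, S.h_dot, ih₁, ih₂, matches'_add, matches'_mul]
  | star E ih =>
    simp [derivS, S.h_dot, ih]

end Support

theorem support_derivation_quotient {α ε : Type*} (S : Support α ε)
    (a : α) (w : List α) (E : RegularExpression α) :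
    (S.h (derivWordS S a w E)).matches' = lquot (a :: w) E.matches' := by
  induction w generalizing a E with
  | nil => rw [derivWordS, S.matches'_h_derivS, RegularExpression.matches'_deriv]
  | cons b u ih =>
    rw [derivWordS, ih, S.matches'_h_derivS,
      RegularExpression.matches'_deriv, ← lquot_append]
    rfl
end

section
/- Let α be a finite alphabet and let ≈ be the smallest equivalence relation on RegularExpression α that is a congruence with respect to the operations +, · and * and that satisfies (A+B)+C ≈ A+(B+C), A+B ≈ B+A and A+A ≈ A for all expressions A, B, C. Then for every simple regular expression E over α, the set of ≈-equivalence classes of the iterated Brzozowski derivatives of E, namely {[d_w(E)]_≈ | w ∈ α*}, is finite. (Brzozowski's theorem: the set of dissimilar derivatives of a regular expression is finite.) -/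
/-- The smallest equivalence relation on regular expressions that is a congruence with respect
to `+`, `·` and `*` and in which `+` is associative, commutative and idempotent. -/
inductive Sim {α : Type*} : RegularExpression α → RegularExpression α → Prop
  | refl (A : RegularExpression α) : Sim A A
  | symm {A B : RegularExpression α} : Sim A B → Sim B A
  | trans {A B C : RegularExpression α} : Sim A B → Sim B C → Sim A C
  | plusCongr {A A' B B' : RegularExpression α} :
      Sim A A' → Sim B B' → Sim (A + B) (A' + B')
  | compCongr {A A' B B' : RegularExpression α} :
      Sim A A' → Sim B B' → Sim (A * B) (A' * B')
  | starCongr {A A' : RegularExpression α} : Sim A A' → Sim A.star A'.star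
  | addAssoc (A B C : RegularExpression α) : Sim (A + B + C) (A + (B + C))
  | addComm (A B : RegularExpression α) : Sim (A + B) (B + A)
  | addIdem (A : RegularExpression α) : Sim (A + A) A

/-- Iterated Brzozowski derivative of a regular expression by the letters of a word, in order. -/
def derivWordB {α : Type*} [DecidableEq α] (w : List α) (E : RegularExpression α) :
    RegularExpression α :=
  w.foldl (fun F a => F.deriv a) E

/-!
Up to `Sim`, the sum `+` is associative, commutative and idempotent, so similarity classes form a
join-semilattice on which `d_a` is a join-homomorphism. By induction on `E` one finds a finite set
`S` of classes such that every `d_a(E)` and every `d_a(x)`, `x ∈ S`, is a finite join of elements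
of `S`; then so is every `d_w(E)` with `w ≠ ε`, and there are only finitely many such joins. For
a product `P · Q` one takes `S = {x · Q | x a join from S_P} ∪ S_Q`, for `P*` the set
`{x · P* | x a join from S_P}`, using `d_a(P*) = d_a(P) · P*`.
-/

namespace Sim

variable {α : Type*}

theorem matchEpsilon_eq {A B : RegularExpression α} (h : Sim A B) :
    A.matchEpsilon = B.matchEpsilon := by
  induction h with
  | refl => rfl
  | symm _ ih => exact ih.symm
  | trans _ _ ih₁ ih₂ => exact ih₁.trans ih₂
  | plusCongr _ _ ih₁ ih₂ | compCongr _ _ ih₁ ih₂ =>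
    simp only [RegularExpression.matchEpsilon, ih₁, ih₂]
  | starCongr => rfl
  | addAssoc => exact Bool.or_assoc _ _ _
  | addComm => exact Bool.or_comm _ _
  | addIdem => exact Bool.or_self _

theorem deriv [DecidableEq α] {A B : RegularExpression α} (h : Sim A B) (a : α) :
    Sim (A.deriv a) (B.deriv a) := by
  induction h with
  | refl => exact .refl _
  | symm _ ih => exact ih.symm
  | trans _ _ ih₁ ih₂ => exact ih₁.trans ih₂
  | plusCongr _ _ ih₁ ih₂ => exact ih₁.plusCongr ih₂
  | compCongr h₁ h₂ ih₁ ih₂ =>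
    simp only [RegularExpression.deriv, h₁.matchEpsilon_eq]
    split_ifs
    exacts [(ih₁.compCongr h₂).plusCongr ih₂, ih₁.compCongr h₂]
  | starCongr h ih => exact ih.compCongr h.starCongr
  | addAssoc => exact .addAssoc _ _ _
  | addComm => exact .addComm _ _
  | addIdem => exact .addIdem _

end Sim

abbrev SimClass (α : Type*) := Quot (@Sim α)

namespace SimClass

variable {α : Type*}

instance : Max (SimClass α) :=
  ⟨Quot.map₂ (· + ·) (fun _ _ _ h => (Sim.refl _).plusCongr h)
    (fun _ _ _ h => h.plusCongr (Sim.refl _))⟩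

instance : Mul (SimClass α) :=
  ⟨Quot.map₂ (· * ·) (fun _ _ _ h => (Sim.refl _).compCongr h)
    (fun _ _ _ h => h.compCongr (Sim.refl _))⟩

instance : SemilatticeSup (SimClass α) :=
  SemilatticeSup.mk'
    (by rintro ⟨A⟩ ⟨B⟩; exact Quot.sound (.addComm A B))
    (by rintro ⟨A⟩ ⟨B⟩ ⟨C⟩; exact Quot.sound (.addAssoc A B C))
    (by rintro ⟨A⟩; exact Quot.sound (.addIdem A))

def matchEpsilon : SimClass α → Bool :=
  Quot.lift RegularExpression.matchEpsilon fun _ _ h => h.matchEpsilon_eq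

variable [DecidableEq α]

def deriv (a : α) : SimClass α → SimClass α :=
  Quot.map (·.deriv a) fun _ _ h => h.deriv a

theorem deriv_mk (a : α) (E : RegularExpression α) :
    deriv a (Quot.mk Sim E) = Quot.mk Sim (E.deriv a) :=
  rfl

theorem deriv_sup (a : α) (x y : SimClass α) : deriv a (x ⊔ y) = deriv a x ⊔ deriv a y := by
  induction x using Quot.ind
  induction y using Quot.ind
  rfl

theorem deriv_mul (a : α) (x y : SimClass α) :
    deriv a (x * y) =
      if x.matchEpsilon then deriv a x * y ⊔ deriv a y else deriv a x * y := by
  induction x using Quot.ind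
  induction y using Quot.ind
  exact apply_ite (Quot.mk Sim) _ _ _

def DerivClosed (S : Set (SimClass α)) : Prop :=
  ∀ x ∈ S, ∀ a, deriv a x ∈ supClosure S

theorem DerivClosed.deriv_mem_supClosure {S : Set (SimClass α)} (hS : DerivClosed S)
    {x : SimClass α} (hx : x ∈ supClosure S) (a : α) : deriv a x ∈ supClosure S := by
  refine supClosure_min (t := {x | deriv a x ∈ supClosure S}) (fun x hx => hS x hx a) ?_ hx
  intro x hx y hy
  rw [Set.mem_ofPred_eq, deriv_sup]
  exact supClosed_supClosure hx hy

theorem deriv_mul_mem_supClosure {S T : Set (SimClass α)} {x y : SimClass α}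
    (hST : (· * y) '' supClosure S ⊆ T) (hx : ∀ a, deriv a x ∈ supClosure S)
    (hy : ∀ a, deriv a y ∈ supClosure T) (a : α) : deriv a (x * y) ∈ supClosure T := by
  have hxy : deriv a x * y ∈ supClosure T := subset_supClosure (hST ⟨_, hx a, rfl⟩)
  rw [deriv_mul]
  split_ifs
  exacts [supClosed_supClosure hxy (hy a), hxy]

theorem exists_finite_derivClosed (E : RegularExpression α) :
    ∃ S : Set (SimClass α), S.Finite ∧ DerivClosed S ∧
      ∀ a, deriv a (Quot.mk Sim E) ∈ supClosure S := by
  induction E with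
  | zero | epsilon =>
    refine ⟨{Quot.mk Sim 0}, Set.finite_singleton _, ?_, fun _ => subset_supClosure rfl⟩
    rintro _ rfl _
    exact subset_supClosure rfl
  | char b =>
    have hS : ∀ a, deriv a (Quot.mk Sim (.char b)) ∈ ({Quot.mk Sim 0, Quot.mk Sim 1} : Set _) := by
      intro a
      rcases eq_or_ne b a with rfl | h
      · simp [deriv_mk, RegularExpression.deriv_char_self]
      · simp [deriv_mk, RegularExpression.deriv_char_of_ne h]
    refine ⟨_, Set.toFinite _, ?_, fun a => subset_supClosure (hS a)⟩
    rintro _ (rfl | rfl) _ <;> exact subset_supClosure (by simp [deriv_mk])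
  | plus P Q ihP ihQ =>
    obtain ⟨SP, hPfin, hSP, hP⟩ := ihP
    obtain ⟨SQ, hQfin, hSQ, hQ⟩ := ihQ
    have hPS : supClosure SP ⊆ supClosure (SP ∪ SQ) := supClosure_mono Set.subset_union_left
    have hQS : supClosure SQ ⊆ supClosure (SP ∪ SQ) := supClosure_mono Set.subset_union_right
    refine ⟨SP ∪ SQ, hPfin.union hQfin, ?_, fun a => ?_⟩
    · rintro x (hx | hx) a
      exacts [hPS (hSP x hx a), hQS (hSQ x hx a)]
    · have := supClosed_supClosure (hPS (hP a)) (hQS (hQ a))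
      rwa [← deriv_sup] at this
  | comp P Q ihP ihQ =>
    obtain ⟨SP, hPfin, hSP, hP⟩ := ihP
    obtain ⟨SQ, hQfin, hSQ, hQ⟩ := ihQ
    set S := (· * Quot.mk Sim Q) '' supClosure SP ∪ SQ
    have hQS : supClosure SQ ⊆ supClosure S := supClosure_mono Set.subset_union_right
    refine ⟨S, (hPfin.supClosure.image _).union hQfin, ?_,
      deriv_mul_mem_supClosure Set.subset_union_left hP (fun a => hQS (hQ a))⟩
    rintro _ (⟨x, hx, rfl⟩ | hx) a
    · exact deriv_mul_mem_supClosure Set.subset_union_left (hSP.deriv_mem_supClosure hx)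
        (fun a => hQS (hQ a)) a
    · exact hQS (hSQ _ hx a)
  | star P ihP =>
    obtain ⟨SP, hPfin, hSP, hP⟩ := ihP
    have hstar : ∀ a, deriv a (Quot.mk Sim P.star) ∈
        supClosure ((· * Quot.mk Sim P.star) '' supClosure SP) :=
      fun a => subset_supClosure ⟨_, hP a, rfl⟩
    refine ⟨_, hPfin.supClosure.image _, ?_, hstar⟩
    rintro _ ⟨x, hx, rfl⟩ a
    exact deriv_mul_mem_supClosure subset_rfl (hSP.deriv_mem_supClosure hx) hstar a

theorem mk_derivWordB_mem {T : Set (SimClass α)} (hT : ∀ x ∈ T, ∀ a, deriv a x ∈ T)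
    {E : RegularExpression α} (hE : Quot.mk Sim E ∈ T) (w : List α) :
    Quot.mk Sim (derivWordB w E) ∈ T := by
  induction w generalizing E with
  | nil => exact hE
  | cons a w ih => exact ih (hT _ hE a)

end SimClass

theorem brzozowski_dissimilar_derivatives_finite_general {α : Type*} [DecidableEq α]
    (E : RegularExpression α) :
    (Set.range fun w : List α => Quot.mk Sim (derivWordB w E)).Finite := by
  obtain ⟨S, hfin, hS, hE⟩ := SimClass.exists_finite_derivClosed E
  refine (hfin.supClosure.insert (Quot.mk Sim E)).subset ?_
  rintro _ ⟨_ | ⟨a, w⟩, rfl⟩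
  · exact Set.mem_insert _ _
  · exact Set.mem_insert_of_mem _
      (SimClass.mk_derivWordB_mem (fun _ hx => hS.deriv_mem_supClosure hx) (hE a) w)

theorem brzozowski_dissimilar_derivatives_finite {α : Type*} [Fintype α] [DecidableEq α]
    (E : RegularExpression α) :
    (Set.range fun w : List α => Quot.mk Sim (derivWordB w E)).Finite :=
  brzozowski_dissimilar_derivatives_finite_general E
end
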